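/- Let M = {0} ∪ {2^{−n} : n ∈ ℕ} ⊆ ℝ and K = M × [0,1] ⊆ ℝ². Then there exists f : K → ℝ admitting a continuous derivative on K (so f ∈ C¹(K)) that is not Lipschitz continuous on K; in particular, there is no F ∈ C¹(ℝ²) with F|_K = f, so C¹(K) ≠ C¹(ℝ²|K). -/

import Mathlib

open Set Filter Topology MeasureTheory
open scoped NNReal ENNReal

noncomputable section

/-- `df` is a (not necessarily unique) derivative of `f` on the set `K`:
at every `x ∈ K`, `(f y - f x - ⟪df x, y - x⟫)/‖y - x‖ → 0` as `y → x` within `K`. -/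
def IsDerivOn {d : ℕ} (K : Set (EuclideanSpace ℝ (Fin d)))
    (f : EuclideanSpace ℝ (Fin d) → ℝ)
    (df : EuclideanSpace ℝ (Fin d) → EuclideanSpace ℝ (Fin d)) : Prop :=
  ∀ x ∈ K, Filter.Tendsto
    (fun y => (f y - f x - (inner ℝ (df x) (y - x) : ℝ)) / ‖y - x‖)
    (𝓝[K \ {x}] x) (𝓝 0)

/-- The set `K = ({0} ∪ {2^{-n} : n ∈ ℕ}) × [0,1] ⊆ ℝ²`. -/
def prodSet : Set (EuclideanSpace ℝ (Fin 2)) :=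
  {p | (p 0 = 0 ∨ ∃ n : ℕ, p 0 = (2:ℝ)⁻¹ ^ n) ∧ p 1 ∈ Icc (0:ℝ) 1}

/-!
On the line `{2⁻ⁿ} × [0,1]` let `f` be the bump `t ↦ 2⁻ⁿ n φ(n t)`, where `φ` is `C¹` with
support in `[a, b] ⊂ (0, ∞)`, and let `f = 0` on `{0} × [0,1]`. The `t`-derivative on the
`n`-th line is `O(n² 2⁻ⁿ) → 0`, so `(0, ∂ₜ f)` is continuous on `K`. It is a derivative of `f`:
the lines are isolated in `K`, and near a point `(0, s)` with `s > 0` the bumps, which slide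
down to `t = 0`, have left; near the origin a nonzero value on the `n`-th line is at distance
`≥ a / n` from it, while `|f| = O(n 2⁻ⁿ) = o(1 / n)`. But the bump of height `n 2⁻ⁿ` lies at
distance `2⁻ⁿ` from the axis, so `f` is not Lipschitz on `K`, whereas every `C¹` function on
`ℝ²` is Lipschitz on the bounded set `K`.
-/

open Function Asymptotics

local notation "ℝ²" => EuclideanSpace ℝ (Fin 2)

theorem IsDerivOn.of_hasFDerivWithinAt {d : ℕ} {K : Set (EuclideanSpace ℝ (Fin d))}
    {f : EuclideanSpace ℝ (Fin d) → ℝ}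
    {df : EuclideanSpace ℝ (Fin d) → EuclideanSpace ℝ (Fin d)}
    (h : ∀ x ∈ K, HasFDerivWithinAt f (innerSL ℝ (df x)) K x) : IsDerivOn K f df := by
  intro x hx
  rw [tendsto_zero_iff_norm_tendsto_zero]
  refine ((hasFDerivWithinAt_iff_tendsto.1 (h x hx)).mono_left
    (nhdsWithin_mono _ sdiff_subset)).congr fun y => ?_
  simp [div_eq_inv_mul]

theorem ContDiff.exists_lipschitzOnWith_of_isBounded {E F : Type*} [NormedAddCommGroup E]
    [NormedSpace ℝ E] [ProperSpace E] [NormedAddCommGroup F] [NormedSpace ℝ F] {f : E → F}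
    (hf : ContDiff ℝ 1 f) {s : Set E} (hs : Bornology.IsBounded s) :
    ∃ C, LipschitzOnWith C f s := by
  obtain ⟨r, hr⟩ := hs.subset_closedBall 0
  obtain ⟨C, hC⟩ := hf.contDiffOn.exists_lipschitzOnWith one_ne_zero (convex_closedBall 0 r)
    (isCompact_closedBall 0 r)
  exact ⟨C, hC.mono hr⟩

lemma eq_half_pow_of_abs_sub_lt {x : ℝ} {n : ℕ} (hx : x = 0 ∨ ∃ m : ℕ, x = 2⁻¹ ^ m)
    (h : |x - 2⁻¹ ^ n| < 2⁻¹ ^ (n + 1)) : x = 2⁻¹ ^ n := by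
  have hn : (0 : ℝ) < 2⁻¹ ^ n := by positivity
  rw [pow_succ] at h
  rcases hx with rfl | ⟨m, rfl⟩
  · rw [zero_sub, abs_neg, abs_of_pos hn] at h
    linarith
  rcases lt_trichotomy m n with hmn | rfl | hnm
  · have : (2⁻¹ : ℝ) ^ n ≤ 2⁻¹ ^ (m + 1) := pow_le_pow_of_le_one (by norm_num) (by norm_num) hmn
    rw [pow_succ] at this
    have := le_abs_self ((2⁻¹ : ℝ) ^ m - 2⁻¹ ^ n)
    linarith
  · rfl
  · have : (2⁻¹ : ℝ) ^ m ≤ 2⁻¹ ^ (n + 1) := pow_le_pow_of_le_one (by norm_num) (by norm_num) hnm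
    rw [pow_succ] at this
    have := neg_abs_le ((2⁻¹ : ℝ) ^ m - 2⁻¹ ^ n)
    linarith

lemma eventually_abs_coord_sub_lt {ι : Type*} (p : EuclideanSpace ℝ ι) (i : ι) {r : ℝ}
    (hr : 0 < r) : ∀ᶠ q in 𝓝 p, |q i - p i| < r :=
  ((PiLp.continuous_apply 2 _ i).tendsto p).eventually (eventually_abs_sub_lt _ hr)

lemma eventually_fst_eq_of_fst_eq_half_pow {p : ℝ²} {n : ℕ} (hp : p 0 = 2⁻¹ ^ n) :
    ∀ᶠ q in 𝓝[prodSet] p, q 0 = p 0 := by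
  filter_upwards [self_mem_nhdsWithin,
    nhdsWithin_le_nhds (eventually_abs_coord_sub_lt p 0 (by positivity : (0 : ℝ) < 2⁻¹ ^ (n + 1)))]
    with q hq hqp
  rw [hp] at hqp ⊢
  exact eq_half_pow_of_abs_sub_lt hq.1 hqp

lemma eventually_fst_eq_zero_or_half_pow {p : ℝ²} (hp : p 0 = 0) {P : ℕ → Prop}
    (hP : ∀ᶠ m in atTop, P m) : ∀ᶠ q in 𝓝[prodSet] p, q 0 = 0 ∨ ∃ m, P m ∧ q 0 = 2⁻¹ ^ m := by
  obtain ⟨N, hN⟩ := eventually_atTop.1 hP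
  filter_upwards [self_mem_nhdsWithin,
    nhdsWithin_le_nhds (eventually_abs_coord_sub_lt p 0 (by positivity : (0 : ℝ) < 2⁻¹ ^ N))]
    with q hq hqp
  refine hq.1.imp_right fun ⟨m, hm⟩ => ⟨m, hN m ?_, hm⟩
  rw [hp, sub_zero, hm, abs_of_pos (by positivity),
    pow_lt_pow_iff_right_of_lt_one₀ (by norm_num) (by norm_num)] at hqp
  exact hqp.le

lemma isBounded_prodSet : Bornology.IsBounded prodSet := by
  refine (Metric.isBounded_closedBall (x := (0 : ℝ²)) (r := 2)).subset fun p hp => ?_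
  have h0 : 0 ≤ p 0 ∧ p 0 ≤ 1 := by
    rcases hp.1 with h | ⟨n, h⟩ <;> rw [h]
    · norm_num
    · exact ⟨by positivity, pow_le_one₀ (by norm_num) (by norm_num)⟩
  obtain ⟨h1, h1'⟩ := hp.2
  rw [mem_closedBall_zero_iff, EuclideanSpace.norm_eq, Fin.sum_univ_two, Real.sqrt_le_iff]
  simp only [Real.norm_eq_abs, sq_abs]
  constructor <;> nlinarith

/-- The index `n` of the line `{2⁻¹ ^ n} × [0,1]`; the junk value `Real.logb 2 0 = 0` makes
`slidingBump` vanish on `{0} × [0,1]` without a case split. -/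
def lineIndex (x : ℝ) : ℝ := Real.logb 2 x⁻¹

@[simp] lemma lineIndex_zero : lineIndex 0 = 0 := by simp [lineIndex]

@[simp] lemma lineIndex_half_pow (n : ℕ) : lineIndex (2⁻¹ ^ n) = n := by
  simp [lineIndex, Real.logb_pow]

section SlidingBump

variable (φ : ℝ → ℝ)

def slidingBump (p : ℝ²) : ℝ := p 0 * lineIndex (p 0) * φ (lineIndex (p 0) * p 1)

def slidingBumpGrad (p : ℝ²) : ℝ² :=
  (p 0 * lineIndex (p 0) ^ 2 * deriv φ (lineIndex (p 0) * p 1)) • EuclideanSpace.single 1 1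

variable {φ}

lemma slidingBump_of_fst_eq_zero {p : ℝ²} (hp : p 0 = 0) : slidingBump φ p = 0 := by
  simp [slidingBump, hp]

lemma slidingBumpGrad_of_fst_eq_zero {p : ℝ²} (hp : p 0 = 0) : slidingBumpGrad φ p = 0 := by
  simp [slidingBumpGrad, hp]

lemma slidingBump_of_fst_eq_half_pow {p : ℝ²} {n : ℕ} (hp : p 0 = 2⁻¹ ^ n) :
    slidingBump φ p = 2⁻¹ ^ n * n * φ (n * p 1) := by
  rw [slidingBump, hp, lineIndex_half_pow]

lemma norm_slidingBumpGrad_of_fst_eq_half_pow {p : ℝ²} {n : ℕ} (hp : p 0 = 2⁻¹ ^ n) :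
    ‖slidingBumpGrad φ p‖ = 2⁻¹ ^ n * n ^ 2 * |deriv φ (n * p 1)| := by
  rw [slidingBumpGrad, hp, lineIndex_half_pow, norm_smul, PiLp.norm_single, norm_one,
    mul_one, Real.norm_eq_abs, abs_mul, abs_mul,
    abs_of_nonneg (by positivity : (0 : ℝ) ≤ 2⁻¹ ^ n),
    abs_of_nonneg (by positivity : (0 : ℝ) ≤ (n : ℝ) ^ 2)]

lemma hasFDerivWithinAt_slidingBump_of_eventually_fst_eq (hφ : Differentiable ℝ φ)
    {K : Set ℝ²} {p : ℝ²} (h : ∀ᶠ q in 𝓝[K] p, q 0 = p 0) :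
    HasFDerivWithinAt (slidingBump φ) (innerSL ℝ (slidingBumpGrad φ p)) K p := by
  set x := p 0
  set a := lineIndex x
  have hline :
      HasDerivAt (fun t => x * a * φ (a * t)) (x * a ^ 2 * deriv φ (a * p 1)) (p 1) := by
    have hscaled : HasDerivAt (fun t => φ (a * t)) (deriv φ (a * p 1) * a) (p 1) := by
      have := (hφ _).hasDerivAt.comp (p 1) ((hasDerivAt_id' (p 1)).const_mul a)
      rwa [mul_one] at this
    exact (hscaled.const_mul (x * a)).congr_deriv (by ring)
  have hgrad : innerSL ℝ (slidingBumpGrad φ p) =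
      (x * a ^ 2 * deriv φ (a * p 1)) • EuclideanSpace.proj (1 : Fin 2) := by
    ext v
    simp [slidingBumpGrad, x, a, EuclideanSpace.inner_single_left]
  rw [hgrad]
  have hproj := (EuclideanSpace.proj (𝕜 := ℝ) (1 : Fin 2)).hasFDerivAt (x := p)
  refine (hline.comp_hasFDerivAt p hproj).hasFDerivWithinAt.congr_of_eventuallyEq ?_ rfl
  filter_upwards [h] with q hq
  simp [slidingBump, hq, x, a]

lemma continuousWithinAt_slidingBumpGrad_of_eventually_fst_eq (hφ : Continuous (deriv φ))
    {K : Set ℝ²} {p : ℝ²} (h : ∀ᶠ q in 𝓝[K] p, q 0 = p 0) :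
    ContinuousWithinAt (slidingBumpGrad φ) K p := by
  have hfrozen : Continuous fun q : ℝ² =>
      (p 0 * lineIndex (p 0) ^ 2 * deriv φ (lineIndex (p 0) * q 1)) •
        EuclideanSpace.single (1 : Fin 2) (1 : ℝ) := by
    fun_prop
  refine hfrozen.continuousWithinAt.congr_of_eventuallyEq ?_ rfl
  filter_upwards [h] with q hq
  simp [slidingBumpGrad, hq]

lemma tendsto_mul_sq_mul_half_pow (B : ℝ) :
    Tendsto (fun m : ℕ => B * ((m : ℝ) ^ 2 * 2⁻¹ ^ m)) atTop (𝓝 0) := by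
  simpa using (tendsto_pow_const_mul_const_pow_of_lt_one 2 (by norm_num : (0 : ℝ) ≤ 2⁻¹)
    (by norm_num)).const_mul B

lemma continuousWithinAt_slidingBumpGrad_of_fst_eq_zero {B : ℝ} (hB : ∀ u, |deriv φ u| ≤ B)
    {p : ℝ²} (hp : p 0 = 0) : ContinuousWithinAt (slidingBumpGrad φ) prodSet p := by
  rw [ContinuousWithinAt, slidingBumpGrad_of_fst_eq_zero hp, Metric.tendsto_nhds]
  intro ε hε
  filter_upwards [eventually_fst_eq_zero_or_half_pow hp
    ((tendsto_mul_sq_mul_half_pow B).eventually (gt_mem_nhds hε))] with q hq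
  rw [dist_zero_right]
  rcases hq with hq | ⟨m, hm, hq⟩
  · simpa [slidingBumpGrad_of_fst_eq_zero hq] using hε
  calc ‖slidingBumpGrad φ q‖ = 2⁻¹ ^ m * m ^ 2 * |deriv φ (m * q 1)| :=
        norm_slidingBumpGrad_of_fst_eq_half_pow hq
    _ ≤ 2⁻¹ ^ m * m ^ 2 * B := by gcongr; exact hB _
    _ < ε := by linarith

lemma slidingBump_eventuallyEq_zero_of_snd_pos {b : ℝ} (hsupp : support φ ⊆ Iic b) {p : ℝ²}
    (hp0 : p 0 = 0) (hp1 : 0 < p 1) : slidingBump φ =ᶠ[𝓝[prodSet] p] 0 := by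
  obtain ⟨N, hN⟩ := exists_nat_gt (2 * b / p 1)
  rw [div_lt_iff₀ hp1] at hN
  filter_upwards [eventually_fst_eq_zero_or_half_pow hp0 (eventually_ge_atTop N),
    nhdsWithin_le_nhds (eventually_abs_coord_sub_lt p 1 (half_pos hp1))] with q hq hq1
  rcases hq with hq | ⟨m, hm, hq⟩
  · exact slidingBump_of_fst_eq_zero hq
  have hbm : b < m * q 1 := by
    have hq1' : p 1 / 2 < q 1 := by linarith [neg_abs_le (q 1 - p 1)]
    have hNm : (N : ℝ) ≤ m := by exact_mod_cast hm
    nlinarith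
  rw [Pi.zero_apply, slidingBump_of_fst_eq_half_pow hq,
    notMem_support.1 fun h => (hsupp h).not_gt hbm, mul_zero]

lemma slidingBump_isLittleO_of_fst_eq_zero_of_snd_eq_zero {a B : ℝ} (ha : 0 < a)
    (hsupp : support φ ⊆ Ici a) (hB : ∀ u, |φ u| ≤ B) {p : ℝ²} (hp0 : p 0 = 0) (hp1 : p 1 = 0) :
    slidingBump φ =o[𝓝[prodSet] p] fun q => q - p := by
  refine isLittleO_iff.2 fun c hc => ?_
  filter_upwards [eventually_fst_eq_zero_or_half_pow hp0
    ((tendsto_mul_sq_mul_half_pow B).eventually (ge_mem_nhds (mul_pos hc ha)))] with q hq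
  rcases hq with hq | ⟨m, hm, hq⟩
  · rw [slidingBump_of_fst_eq_zero hq, norm_zero]
    positivity
  rw [slidingBump_of_fst_eq_half_pow hq, Real.norm_eq_abs]
  by_cases hφq : φ (m * q 1) = 0
  · rw [hφq, mul_zero, abs_zero]
    positivity
  -- the bump on the `m`-th line is at height `≥ a / m`, so at distance `≥ a / m` from `p`
  have hdist : a ≤ m * ‖q - p‖ := by
    have hq1 : |q 1| ≤ ‖q - p‖ := by simpa [hp1] using PiLp.norm_apply_le (q - p) 1
    calc a ≤ m * q 1 := hsupp hφq
      _ ≤ m * ‖q - p‖ := by gcongr; exact (le_abs_self _).trans hq1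
  refine le_of_mul_le_mul_left ?_ ha
  calc a * |2⁻¹ ^ m * m * φ (m * q 1)| = 2⁻¹ ^ m * m * |φ (m * q 1)| * a := by
        rw [abs_mul, abs_of_nonneg (by positivity)]; ring
    _ ≤ 2⁻¹ ^ m * m * B * (m * ‖q - p‖) := by
        have hB0 : 0 ≤ B := (abs_nonneg _).trans (hB 0)
        gcongr
        exact hB _
    _ = B * (m ^ 2 * 2⁻¹ ^ m) * ‖q - p‖ := by ring
    _ ≤ c * a * ‖q - p‖ := by gcongr
    _ = a * (c * ‖q - p‖) := by ring

lemma hasFDerivWithinAt_slidingBump_of_fst_eq_zero {a b B : ℝ} (ha : 0 < a)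
    (hsupp : support φ ⊆ Icc a b) (hB : ∀ u, |φ u| ≤ B) {p : ℝ²} (hp : p ∈ prodSet)
    (hp0 : p 0 = 0) :
    HasFDerivWithinAt (slidingBump φ) (innerSL ℝ (slidingBumpGrad φ p)) prodSet p := by
  rw [slidingBumpGrad_of_fst_eq_zero hp0, map_zero]
  refine .of_isLittleO ?_
  simp only [slidingBump_of_fst_eq_zero hp0, sub_zero, zero_apply]
  rcases hp.2.1.eq_or_lt with hp1 | hp1
  · exact slidingBump_isLittleO_of_fst_eq_zero_of_snd_eq_zero ha
      (hsupp.trans Icc_subset_Ici_self) hB hp0 hp1.symm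
  · exact (slidingBump_eventuallyEq_zero_of_snd_pos (hsupp.trans Icc_subset_Iic_self) hp0
      hp1).trans_isLittleO (isLittleO_zero _ _)

theorem continuousOn_slidingBumpGrad (hφ : ContDiff ℝ 1 φ) (hcs : HasCompactSupport φ) :
    ContinuousOn (slidingBumpGrad φ) prodSet := by
  obtain ⟨B, hB⟩ := (hφ.continuous_deriv le_rfl).bounded_above_of_compact_support hcs.deriv
  intro p hp
  rcases hp.1 with hp0 | ⟨n, hn⟩
  · exact continuousWithinAt_slidingBumpGrad_of_fst_eq_zero hB hp0
  · exact continuousWithinAt_slidingBumpGrad_of_eventually_fst_eq (hφ.continuous_deriv le_rfl)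
      (eventually_fst_eq_of_fst_eq_half_pow hn)

theorem isDerivOn_slidingBump (hφ : ContDiff ℝ 1 φ) {a b : ℝ} (ha : 0 < a)
    (hsupp : support φ ⊆ Icc a b) : IsDerivOn prodSet (slidingBump φ) (slidingBumpGrad φ) := by
  have hcs : HasCompactSupport φ :=
    .intro isCompact_Icc fun u hu => notMem_support.1 fun h => hu (hsupp h)
  obtain ⟨B, hB⟩ := hφ.continuous.bounded_above_of_compact_support hcs
  refine .of_hasFDerivWithinAt fun p hp => ?_
  rcases hp.1 with hp0 | ⟨n, hn⟩
  · exact hasFDerivWithinAt_slidingBump_of_fst_eq_zero ha hsupp hB hp hp0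
  · exact hasFDerivWithinAt_slidingBump_of_eventually_fst_eq (hφ.differentiable one_ne_zero)
      (eventually_fst_eq_of_fst_eq_half_pow hn)

theorem not_lipschitzOnWith_slidingBump {c : ℝ} (hc : 0 < c) (hφc : φ c ≠ 0) (C : ℝ≥0) :
    ¬ LipschitzOnWith C (slidingBump φ) prodSet := by
  intro hC
  obtain ⟨m, hm⟩ := exists_nat_gt (max c (C / |φ c|))
  have hcm : c < m := (le_max_left _ _).trans_lt hm
  have hm0 : (0 : ℝ) < m := hc.trans hcm
  have ht : c / m ∈ Icc (0 : ℝ) 1 := ⟨by positivity, (div_le_one hm0).2 hcm.le⟩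
  have hp : !₂[2⁻¹ ^ m, c / m] ∈ prodSet := ⟨Or.inr ⟨m, by simp⟩, by simpa using ht⟩
  have hq : !₂[0, c / m] ∈ prodSet := ⟨Or.inl (by simp), by simpa using ht⟩
  have hlip := hC.dist_le_mul _ hp _ hq
  have hdist : dist !₂[(2 : ℝ)⁻¹ ^ m, c / m] !₂[0, c / m] = 2⁻¹ ^ m := by
    simp [EuclideanSpace.dist_eq]
  rw [slidingBump_of_fst_eq_half_pow (n := m) (by simp), slidingBump_of_fst_eq_zero (by simp),
    hdist, Real.dist_eq, sub_zero] at hlip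
  simp only [Matrix.cons_val_one, Matrix.cons_val_zero,
    mul_div_cancel₀ _ hm0.ne', abs_mul, abs_of_pos (by positivity : (0 : ℝ) < 2⁻¹ ^ m),
    Nat.abs_cast] at hlip
  have hCm : (C : ℝ) < m * |φ c| :=
    (div_lt_iff₀ (abs_pos.2 hφc)).1 ((le_max_right _ _).trans_lt hm)
  have : (0 : ℝ) < 2⁻¹ ^ m := by positivity
  nlinarith

end SlidingBump

/-- There is `f ∈ C¹(K)` on `K = M × [0,1]`, `M = {0} ∪ {2^{-n}}`, which is not
Lipschitz on `K`; in particular `f` is not the restriction of any `C¹` function on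
`ℝ²`, so `C¹(K) ≠ C¹(ℝ²|K)`. -/
theorem product_counterexample :
    ∃ (f : EuclideanSpace ℝ (Fin 2) → ℝ)
      (df : EuclideanSpace ℝ (Fin 2) → EuclideanSpace ℝ (Fin 2)),
      ContinuousOn df prodSet ∧ IsDerivOn prodSet f df ∧
      (¬ ∃ C : ℝ≥0, LipschitzOnWith C f prodSet) ∧
      (¬ ∃ F : EuclideanSpace ℝ (Fin 2) → ℝ, ContDiff ℝ 1 F ∧ EqOn F f prodSet) := by
  let φ : ContDiffBump (2 : ℝ) := ⟨1 / 2, 1, by norm_num, by norm_num⟩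
  have hsupp : support φ ⊆ Icc 1 3 := by
    rw [φ.support_eq, Real.ball_eq_Ioo]
    norm_num [φ]
    exact Ioo_subset_Icc_self
  have hφ2 : φ 2 ≠ 0 := by
    rw [φ.one_of_mem_closedBall (Metric.mem_closedBall_self φ.rIn_pos.le)]
    exact one_ne_zero
  have hnotLip : ¬ ∃ C : ℝ≥0, LipschitzOnWith C (slidingBump φ) prodSet :=
    fun ⟨C, hC⟩ => not_lipschitzOnWith_slidingBump two_pos hφ2 C hC
  refine ⟨slidingBump φ, slidingBumpGrad φ,
    continuousOn_slidingBumpGrad φ.contDiff φ.hasCompactSupport,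
    isDerivOn_slidingBump φ.contDiff one_pos hsupp, hnotLip, ?_⟩
  rintro ⟨F, hF, hFf⟩
  obtain ⟨C, hC⟩ := hF.exists_lipschitzOnWith_of_isBounded isBounded_prodSet
  exact hnotLip ⟨C, fun p hp q hq => by simpa only [hFf hp, hFf hq] using hC hp hq⟩
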